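/- Let q ≥ 2. No rule of the rewriting system P increases the number of nonzero coefficients of a power sum; consequently, if T is compact with e(T) = e(S), then T has at most as many nonzero coefficients as S (compact power sums minimize the number of nonzero coefficients among power sums of the same value). -/
import Mathlib


/-- One rewriting step of the system `𝒫` on base-`q` power sums
(rules (1)–(4) of the paper), given as a relation on coefficient sequences. -/
def PSStep (q : ℤ) (α β : ℕ → ℤ) : Prop :=
  (∃ i, 0 < α i ∧ α (i + 1) < 0 ∧
    β = fun k => if k = i then α i - q
      else if k = i + 1 then α (i + 1) + 1 else α k) ∨
  (∃ i, α i < 0 ∧ 0 < α (i + 1) ∧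
    β = fun k => if k = i then α i + q
      else if k = i + 1 then α (i + 1) - 1 else α k) ∨
  (∃ i j, i < j ∧ 0 < α i ∧ (∀ k, i < k → k ≤ j → α k = q - 1) ∧
    α (j + 1) < q - 1 ∧
    β = fun k => if k = i then α i - q
      else if i < k ∧ k ≤ j then 0
      else if k = j + 1 then α (j + 1) + 1 else α k) ∨
  (∃ i j, i < j ∧ α i < 0 ∧ (∀ k, i < k → k ≤ j → α k = -q + 1) ∧
    -q + 1 < α (j + 1) ∧
    β = fun k => if k = i then α i + q
      else if i < k ∧ k ≤ j then 0
      else if k = j + 1 then α (j + 1) - 1 else α k)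


/-- A power sum `α` is reducible if some rule of `𝒫` applies to it. -/
def PSReducible (q : ℤ) (α : ℕ → ℤ) : Prop := ∃ β, PSStep q α β

open Classical


lemma wt_card (m : ℕ) (γ : ℕ → ℤ) :
    ((Finset.range m).filter fun i => γ i ≠ 0).card
      = ∑ i ∈ Finset.range m, if γ i = 0 then 0 else 1 := by
  rw [Finset.card_filter]
  exact Finset.sum_congr rfl fun i _ => by by_cases h : γ i = 0 <;> simp [h]

lemma val_succ (q : ℤ) (m : ℕ) (γ : ℕ → ℤ) :
    (∑ i ∈ Finset.range (m+1), γ i * q ^ i)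
      = γ 0 + q * ∑ i ∈ Finset.range m, γ (i+1) * q ^ i := by
  rw [Finset.sum_range_succ', Finset.mul_sum]
  rw [Finset.sum_congr rfl (fun i (_ : i ∈ Finset.range m) => show γ (i+1) * q ^ (i+1) = q * (γ (i+1) * q ^ i) by ring)]
  simp [add_comm]

lemma wt_succ (m : ℕ) (γ : ℕ → ℤ) :
    (∑ i ∈ Finset.range (m+1), if γ i = 0 then 0 else 1)
      = (if γ 0 = 0 then 0 else 1) + ∑ i ∈ Finset.range m, if γ (i+1) = 0 then (0:ℕ) else 1 := by
  rw [Finset.sum_range_succ']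
  ring


lemma irr_lc (q : ℤ) (hq : 2 ≤ q) (β : ℕ → ℤ) (hb : ∀ i, |β i| ≤ q - 1)
    (m : ℕ) (hs : ∀ i, m ≤ i → β i = 0) (hnr : ¬ PSReducible q β) :
    ∀ i, (0 < β i → 0 ≤ β (i+1) ∧ β (i+1) ≤ q - 2) ∧
         (β i < 0 → -(q-2) ≤ β (i+1) ∧ β (i+1) ≤ 0) := by
  intro i
  constructor
  · intro hpos
    have h1 : 0 ≤ β (i+1) := by
      by_contra h
      push_neg at h
      exact hnr ⟨_, Or.inl ⟨i, hpos, h, rfl⟩⟩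
    refine ⟨h1, ?_⟩
    by_contra h
    push_neg at h
    have hb1 := abs_le.mp (hb (i+1))
    have heq : β (i+1) = q - 1 := by omega
    have hex : ∃ k, β (i + 1 + k + 1) ≠ q - 1 := by
      refine ⟨m, ?_⟩
      rw [hs (i + 1 + m + 1) (by omega)]
      omega
    set k0 := Nat.find hex with hk0
    have hspec : β (i + 1 + k0 + 1) ≠ q - 1 := Nat.find_spec hex
    refine hnr ⟨_, Or.inr (Or.inr (Or.inl ⟨i, i + 1 + k0, by omega, hpos, ?_, ?_, rfl⟩))⟩
    · intro k hk1 hk2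
      rcases Nat.eq_or_lt_of_le (Nat.succ_le_of_lt hk1) with hk | hk
      · rw [← hk]; exact heq
      · have hu : i + 1 + (k - i - 2) + 1 = k := by omega
        have := Nat.find_min hex (m := k - i - 2) (by omega)
        rw [hu] at this
        exact not_not.mp this
    · have := abs_le.mp (hb (i + 1 + k0 + 1))
      omega
  · intro hneg
    have h1 : β (i+1) ≤ 0 := by
      by_contra h
      push_neg at h
      exact hnr ⟨_, Or.inr (Or.inl ⟨i, hneg, h, rfl⟩)⟩
    refine ⟨?_, h1⟩
    by_contra h
    push_neg at h
    have hb1 := abs_le.mp (hb (i+1))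
    have heq : β (i+1) = -q + 1 := by omega
    have hex : ∃ k, β (i + 1 + k + 1) ≠ -q + 1 := by
      refine ⟨m, ?_⟩
      rw [hs (i + 1 + m + 1) (by omega)]
      omega
    set k0 := Nat.find hex with hk0
    have hspec : β (i + 1 + k0 + 1) ≠ -q + 1 := Nat.find_spec hex
    refine hnr ⟨_, Or.inr (Or.inr (Or.inr ⟨i, i + 1 + k0, by omega, hneg, ?_, ?_, rfl⟩))⟩
    · intro k hk1 hk2
      rcases Nat.eq_or_lt_of_le (Nat.succ_le_of_lt hk1) with hk | hk
      · rw [← hk]; exact heq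
      · have hu : i + 1 + (k - i - 2) + 1 = k := by omega
        have := Nat.find_min hex (m := k - i - 2) (by omega)
        rw [hu] at this
        exact not_not.mp this
    · have := abs_le.mp (hb (i + 1 + k0 + 1))
      omega

lemma step_wt (q : ℤ) (hq : 2 ≤ q) (α β : ℕ → ℤ) (h : PSStep q α β) (m : ℕ)
    (hsα : ∀ i, m ≤ i → α i = 0) (hsβ : ∀ i, m ≤ i → β i = 0) :
    ((Finset.range m).filter fun i => β i ≠ 0).card
      ≤ ((Finset.range m).filter fun i => α i ≠ 0).card := by
  rw [wt_card, wt_card]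
  rcases h with ⟨i, h1, h2, hβ⟩ | ⟨i, h1, h2, hβ⟩ |
    ⟨i, j, hij, h1, hrun, htop, hβ⟩ | ⟨i, j, hij, h1, hrun, htop, hβ⟩
  · apply Finset.sum_le_sum
    intro k _
    have hβk : β k = if k = i then α i - q else if k = i + 1 then α (i + 1) + 1 else α k := by
      rw [hβ]
    rw [hβk]
    rcases eq_or_ne k i with rfl | hki
    · rw [if_pos rfl]; split_ifs <;> omega
    · rcases eq_or_ne k (i+1) with rfl | hki1
      · rw [if_neg hki, if_pos rfl]; split_ifs <;> omega
      · rw [if_neg hki, if_neg hki1]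
  · apply Finset.sum_le_sum
    intro k _
    have hβk : β k = if k = i then α i + q else if k = i + 1 then α (i + 1) - 1 else α k := by
      rw [hβ]
    rw [hβk]
    rcases eq_or_ne k i with rfl | hki
    · rw [if_pos rfl]; split_ifs <;> omega
    · rcases eq_or_ne k (i+1) with rfl | hki1
      · rw [if_neg hki, if_pos rfl]; split_ifs <;> omega
      · rw [if_neg hki, if_neg hki1]
  · -- rule 3
    have hβk : ∀ k, β k = if k = i then α i - q else if i < k ∧ k ≤ j then 0
        else if k = j + 1 then α (j + 1) + 1 else α k := fun k => by rw [hβ]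
    have hβ1 : β (j+1) = α (j+1) + 1 := by
      rw [hβk]; split_ifs <;> first | rfl | omega
    have hβi1 : β (i+1) = 0 := by
      rw [hβk]; split_ifs <;> first | rfl | omega
    have hjm : j + 1 < m := by
      by_contra hc
      push_neg at hc
      have h0 : α (j+1) = 0 := hsα _ hc
      have := hsβ (j+1) hc
      omega
    have hi1m : i + 1 ∈ Finset.range m := Finset.mem_range.mpr (by omega)
    have hj1m : j + 1 ∈ Finset.range m := Finset.mem_range.mpr hjm
    have hi1e : i + 1 ∈ (Finset.range m).erase (j+1) :=
      Finset.mem_erase.mpr ⟨by omega, hi1m⟩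
    rw [← Finset.sum_erase_add (Finset.range m) _ hj1m,
        ← Finset.sum_erase_add (Finset.range m) (fun k => if α k = 0 then (0:ℕ) else 1) hj1m,
        ← Finset.sum_erase_add _ _ hi1e,
        ← Finset.sum_erase_add _ (fun k => if α k = 0 then (0:ℕ) else 1) hi1e]
    have hA : (∑ k ∈ ((Finset.range m).erase (j+1)).erase (i+1), if β k = 0 then (0:ℕ) else 1)
        ≤ ∑ k ∈ ((Finset.range m).erase (j+1)).erase (i+1), if α k = 0 then (0:ℕ) else 1 := by
      apply Finset.sum_le_sum
      intro k hk
      have hk1 : k ≠ i + 1 := (Finset.mem_erase.mp hk).1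
      have hk2 : k ≠ j + 1 := (Finset.mem_erase.mp (Finset.mem_erase.mp hk).2).1
      rw [hβk]
      rcases eq_or_ne k i with rfl | hki
      · rw [if_pos rfl]; split_ifs <;> omega
      · by_cases hkr : i < k ∧ k ≤ j
        · have := hrun k hkr.1 hkr.2
          rw [if_neg hki, if_pos hkr]
          split_ifs <;> omega
        · rw [if_neg hki, if_neg hkr, if_neg hk2]
    have hB : (if β (i+1) = 0 then (0:ℕ) else 1) = 0 := by simp [hβi1]
    have hC : (if α (i+1) = 0 then (0:ℕ) else 1) = 1 := by
      have := hrun (i+1) (by omega) (by omega)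
      rw [if_neg (by omega)]
    have hD : (if β (j+1) = 0 then (0:ℕ) else 1) ≤ 1 := by split_ifs <;> omega
    omega
  · -- rule 4
    have hβk : ∀ k, β k = if k = i then α i + q else if i < k ∧ k ≤ j then 0
        else if k = j + 1 then α (j + 1) - 1 else α k := fun k => by rw [hβ]
    have hβ1 : β (j+1) = α (j+1) - 1 := by
      rw [hβk]; split_ifs <;> first | rfl | omega
    have hβi1 : β (i+1) = 0 := by
      rw [hβk]; split_ifs <;> first | rfl | omega
    have hjm : j + 1 < m := by
      by_contra hc
      push_neg at hc
      have h0 : α (j+1) = 0 := hsα _ hc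
      have := hsβ (j+1) hc
      omega
    have hi1m : i + 1 ∈ Finset.range m := Finset.mem_range.mpr (by omega)
    have hj1m : j + 1 ∈ Finset.range m := Finset.mem_range.mpr hjm
    have hi1e : i + 1 ∈ (Finset.range m).erase (j+1) :=
      Finset.mem_erase.mpr ⟨by omega, hi1m⟩
    rw [← Finset.sum_erase_add (Finset.range m) _ hj1m,
        ← Finset.sum_erase_add (Finset.range m) (fun k => if α k = 0 then (0:ℕ) else 1) hj1m,
        ← Finset.sum_erase_add _ _ hi1e,
        ← Finset.sum_erase_add _ (fun k => if α k = 0 then (0:ℕ) else 1) hi1e]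
    have hA : (∑ k ∈ ((Finset.range m).erase (j+1)).erase (i+1), if β k = 0 then (0:ℕ) else 1)
        ≤ ∑ k ∈ ((Finset.range m).erase (j+1)).erase (i+1), if α k = 0 then (0:ℕ) else 1 := by
      apply Finset.sum_le_sum
      intro k hk
      have hk1 : k ≠ i + 1 := (Finset.mem_erase.mp hk).1
      have hk2 : k ≠ j + 1 := (Finset.mem_erase.mp (Finset.mem_erase.mp hk).2).1
      rw [hβk]
      rcases eq_or_ne k i with rfl | hki
      · rw [if_pos rfl]; split_ifs <;> omega
      · by_cases hkr : i < k ∧ k ≤ j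
        · have := hrun k hkr.1 hkr.2
          rw [if_neg hki, if_pos hkr]
          split_ifs <;> omega
        · rw [if_neg hki, if_neg hkr, if_neg hk2]
    have hB : (if β (i+1) = 0 then (0:ℕ) else 1) = 0 := by simp [hβi1]
    have hC : (if α (i+1) = 0 then (0:ℕ) else 1) = 1 := by
      have := hrun (i+1) (by omega) (by omega)
      rw [if_neg (by omega)]
    have hD : (if β (j+1) = 0 then (0:ℕ) else 1) ≤ 1 := by split_ifs <;> omega
    omega

lemma main_min (q : ℤ) (hq : 2 ≤ q) :
    ∀ m : ℕ, ∀ α β : ℕ → ℤ,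
      (∀ i, |α i| ≤ q - 1) → (∀ i, |β i| ≤ q - 1) →
      (∀ i, m ≤ i → α i = 0) → (∀ i, m ≤ i → β i = 0) →
      (∀ i, (0 < β i → 0 ≤ β (i+1) ∧ β (i+1) ≤ q - 2) ∧
            (β i < 0 → -(q-2) ≤ β (i+1) ∧ β (i+1) ≤ 0)) →
      (((∑ i ∈ Finset.range m, α i * q ^ i) = (∑ i ∈ Finset.range m, β i * q ^ i) →
        (∑ i ∈ Finset.range m, if β i = 0 then 0 else 1)
          ≤ (∑ i ∈ Finset.range m, if α i = 0 then (0:ℕ) else 1)) ∧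
      ((∑ i ∈ Finset.range m, α i * q ^ i) = (∑ i ∈ Finset.range m, β i * q ^ i) + 1 →
        0 ≤ β 0 → β 0 ≤ q - 2 →
        (∑ i ∈ Finset.range m, if β i = 0 then 0 else 1)
          ≤ (∑ i ∈ Finset.range m, if α i = 0 then (0:ℕ) else 1)) ∧
      ((∑ i ∈ Finset.range m, α i * q ^ i) = (∑ i ∈ Finset.range m, β i * q ^ i) + 1 →
        (∑ i ∈ Finset.range m, if β i = 0 then 0 else 1)
          ≤ (∑ i ∈ Finset.range m, if α i = 0 then (0:ℕ) else 1) + 1) ∧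
      ((∑ i ∈ Finset.range m, α i * q ^ i) = (∑ i ∈ Finset.range m, β i * q ^ i) - 1 →
        -(q-2) ≤ β 0 → β 0 ≤ 0 →
        (∑ i ∈ Finset.range m, if β i = 0 then 0 else 1)
          ≤ (∑ i ∈ Finset.range m, if α i = 0 then (0:ℕ) else 1)) ∧
      ((∑ i ∈ Finset.range m, α i * q ^ i) = (∑ i ∈ Finset.range m, β i * q ^ i) - 1 →
        (∑ i ∈ Finset.range m, if β i = 0 then 0 else 1)
          ≤ (∑ i ∈ Finset.range m, if α i = 0 then (0:ℕ) else 1) + 1)) := by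
  intro m
  induction m with
  | zero =>
    intro α β _ _ _ _ _
    simp only [Finset.range_zero, Finset.sum_empty]
    refine ⟨fun _ => le_rfl, fun h => by omega, fun h => by omega,
      fun h => by omega, fun h => by omega⟩
  | succ m IH =>
    intro α β hbα hbβ hsα hsβ hlc
    obtain ⟨α', hα'⟩ : ∃ f : ℕ → ℤ, ∀ i, f i = α (i+1) := ⟨fun i => α (i+1), fun _ => rfl⟩
    obtain ⟨β', hβ'⟩ : ∃ f : ℕ → ℤ, ∀ i, f i = β (i+1) := ⟨fun i => β (i+1), fun _ => rfl⟩
    have IH' := IH α' β' (fun i => by rw [hα']; exact hbα _) (fun i => by rw [hβ']; exact hbβ _)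
      (fun i hi => by rw [hα']; exact hsα _ (by omega))
      (fun i hi => by rw [hβ']; exact hsβ _ (by omega))
      (fun i => by simp only [hβ']; exact hlc (i+1))
    have hvα : (∑ i ∈ Finset.range (m+1), α i * q ^ i)
        = α 0 + q * ∑ i ∈ Finset.range m, α' i * q ^ i := by
      rw [val_succ, show (∑ i ∈ Finset.range m, α (i+1) * q ^ i)
          = ∑ i ∈ Finset.range m, α' i * q ^ i from
        Finset.sum_congr rfl (fun i _ => by rw [hα' i])]
    have hvβ : (∑ i ∈ Finset.range (m+1), β i * q ^ i)
        = β 0 + q * ∑ i ∈ Finset.range m, β' i * q ^ i := by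
      rw [val_succ, show (∑ i ∈ Finset.range m, β (i+1) * q ^ i)
          = ∑ i ∈ Finset.range m, β' i * q ^ i from
        Finset.sum_congr rfl (fun i _ => by rw [hβ' i])]
    have hwα : (∑ i ∈ Finset.range (m+1), if α i = 0 then (0:ℕ) else 1)
        = (if α 0 = 0 then 0 else 1) + ∑ i ∈ Finset.range m, if α' i = 0 then (0:ℕ) else 1 := by
      rw [wt_succ, show (∑ i ∈ Finset.range m, if α (i+1) = 0 then (0:ℕ) else 1)
          = ∑ i ∈ Finset.range m, if α' i = 0 then (0:ℕ) else 1 from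
        Finset.sum_congr rfl (fun i _ => by rw [hα' i])]
    have hwβ : (∑ i ∈ Finset.range (m+1), if β i = 0 then (0:ℕ) else 1)
        = (if β 0 = 0 then 0 else 1) + ∑ i ∈ Finset.range m, if β' i = 0 then (0:ℕ) else 1 := by
      rw [wt_succ, show (∑ i ∈ Finset.range m, if β (i+1) = 0 then (0:ℕ) else 1)
          = ∑ i ∈ Finset.range m, if β' i = 0 then (0:ℕ) else 1 from
        Finset.sum_congr rfl (fun i _ => by rw [hβ' i])]
    set A := ∑ i ∈ Finset.range m, α' i * q ^ i with hA
    set B := ∑ i ∈ Finset.range m, β' i * q ^ i with hB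
    set WA := ∑ i ∈ Finset.range m, if α' i = 0 then (0:ℕ) else 1 with hWA
    set WB := ∑ i ∈ Finset.range m, if β' i = 0 then (0:ℕ) else 1 with hWB
    have hb0α := abs_le.mp (hbα 0)
    have hb0β := abs_le.mp (hbβ 0)
    have hlcP := (hlc 0).1
    have hlcN := (hlc 0).2
    have hβ'0P : 0 < β 0 → 0 ≤ β' 0 ∧ β' 0 ≤ q - 2 := by
      intro h; rw [hβ' 0]; exact hlcP h
    have hβ'0N : β 0 < 0 → -(q-2) ≤ β' 0 ∧ β' 0 ≤ 0 := by
      intro h; rw [hβ' 0]; exact hlcN h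
    have digit : ∀ d : ℤ, -1 ≤ d → d ≤ 1 → α 0 + q * A = β 0 + q * B + d →
        ∃ t : ℤ, (t = -1 ∨ t = 0 ∨ t = 1) ∧ α 0 = β 0 + d + q * t ∧ A = B - t := by
      intro d hd1 hd2 hval
      have h1 : q * (B - A) = α 0 - β 0 - d := by ring_nf; linarith
      have h2 : B - A ≤ 1 := by
        by_contra hc
        push_neg at hc
        have : q * 2 ≤ q * (B - A) := by
          apply mul_le_mul_of_nonneg_left (by omega) (by omega)
        omega
      have h3 : -1 ≤ B - A := by
        by_contra hc
        push_neg at hc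
        have : q * (B - A) ≤ q * (-2) := by
          apply mul_le_mul_of_nonneg_left (by omega) (by omega)
        omega
      refine ⟨B - A, by omega, ?_, by ring⟩
      have : q * (B - A) = α 0 - β 0 - d := h1
      linarith
    -- clause (a)
    have CA : (∑ i ∈ Finset.range (m+1), α i * q ^ i)
        = (∑ i ∈ Finset.range (m+1), β i * q ^ i) →
        (∑ i ∈ Finset.range (m+1), if β i = 0 then (0:ℕ) else 1)
          ≤ ∑ i ∈ Finset.range (m+1), if α i = 0 then (0:ℕ) else 1 := by
      intro hval
      rw [hvα, hvβ] at hval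
      obtain ⟨t, ht, ha0, hAB⟩ := digit 0 (by omega) (by omega) (by linarith)
      rw [hwα, hwβ]
      rcases ht with rfl | rfl | rfl
      · -- t = -1 : α 0 = β 0 - q, A = B + 1, β 0 > 0
        have hpos : 0 < β 0 := by omega
        obtain ⟨hc1, hc2⟩ := hβ'0P hpos
        have hIH := IH'.2.1 (by omega) hc1 hc2
        split_ifs <;> omega
      · -- t = 0
        have hIH := IH'.1 (by omega)
        split_ifs <;> omega
      · -- t = 1 : α 0 = β 0 + q, β 0 < 0
        have hneg : β 0 < 0 := by omega
        obtain ⟨hc1, hc2⟩ := hβ'0N hneg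
        have hIH := IH'.2.2.2.1 (by omega) hc1 hc2
        split_ifs <;> omega
    -- clause (b0)
    have CB0 : (∑ i ∈ Finset.range (m+1), α i * q ^ i)
        = (∑ i ∈ Finset.range (m+1), β i * q ^ i) + 1 →
        0 ≤ β 0 → β 0 ≤ q - 2 →
        (∑ i ∈ Finset.range (m+1), if β i = 0 then (0:ℕ) else 1)
          ≤ ∑ i ∈ Finset.range (m+1), if α i = 0 then (0:ℕ) else 1 := by
      intro hval hs1 hs2
      rw [hvα, hvβ] at hval
      obtain ⟨t, ht, ha0, hAB⟩ := digit 1 (by omega) (by omega) (by linarith)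
      rw [hwα, hwβ]
      rcases ht with rfl | rfl | rfl
      · -- t = -1 : α 0 = β 0 + 1 - q, A = B + 1
        by_cases hz : β 0 = 0
        · have hIH := IH'.2.2.1 (by omega)
          split_ifs <;> omega
        · obtain ⟨hc1, hc2⟩ := hβ'0P (by omega)
          have hIH := IH'.2.1 (by omega) hc1 hc2
          split_ifs <;> omega
      · -- t = 0 : α 0 = β 0 + 1
        have hIH := IH'.1 (by omega)
        split_ifs <;> omega
      · -- t = 1 : α 0 = β 0 + 1 + q : impossible
        exfalso; omega
    -- clause (b)
    have CB : (∑ i ∈ Finset.range (m+1), α i * q ^ i)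
        = (∑ i ∈ Finset.range (m+1), β i * q ^ i) + 1 →
        (∑ i ∈ Finset.range (m+1), if β i = 0 then (0:ℕ) else 1)
          ≤ (∑ i ∈ Finset.range (m+1), if α i = 0 then (0:ℕ) else 1) + 1 := by
      intro hval
      by_cases hr : 0 ≤ β 0 ∧ β 0 ≤ q - 2
      · exact le_trans (CB0 hval hr.1 hr.2) (by omega)
      rw [hvα, hvβ] at hval
      obtain ⟨t, ht, ha0, hAB⟩ := digit 1 (by omega) (by omega) (by linarith)
      rw [hwα, hwβ]
      by_cases hneg : β 0 < 0
      · obtain ⟨hc1, hc2⟩ := hβ'0N hneg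
        rcases ht with rfl | rfl | rfl
        · -- α 0 = β 0 + 1 - q ≤ -q : impossible
          exfalso; omega
        · -- α 0 = β 0 + 1, A = B
          have hIH := IH'.1 (by omega)
          split_ifs <;> omega
        · -- α 0 = β 0 + 1 + q, A = B - 1
          have hIH := IH'.2.2.2.1 (by omega) hc1 hc2
          split_ifs <;> omega
      · -- β 0 = q - 1
        have hq1 : β 0 = q - 1 := by omega
        obtain ⟨hc1, hc2⟩ := hβ'0P (by omega)
        rcases ht with rfl | rfl | rfl
        · -- α 0 = β 0 + 1 - q = 0, A = B + 1
          have hIH := IH'.2.1 (by omega) hc1 hc2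
          split_ifs <;> omega
        · exfalso; omega
        · exfalso; omega
    -- clause (c0)
    have CC0 : (∑ i ∈ Finset.range (m+1), α i * q ^ i)
        = (∑ i ∈ Finset.range (m+1), β i * q ^ i) - 1 →
        -(q-2) ≤ β 0 → β 0 ≤ 0 →
        (∑ i ∈ Finset.range (m+1), if β i = 0 then (0:ℕ) else 1)
          ≤ ∑ i ∈ Finset.range (m+1), if α i = 0 then (0:ℕ) else 1 := by
      intro hval hs1 hs2
      rw [hvα, hvβ] at hval
      obtain ⟨t, ht, ha0, hAB⟩ := digit (-1) (by omega) (by omega) (by linarith)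
      rw [hwα, hwβ]
      rcases ht with rfl | rfl | rfl
      · -- t = -1 : α 0 = β 0 - 1 - q : impossible
        exfalso; omega
      · -- t = 0 : α 0 = β 0 - 1
        have hIH := IH'.1 (by omega)
        split_ifs <;> omega
      · -- t = 1 : α 0 = β 0 - 1 + q, A = B - 1
        by_cases hz : β 0 = 0
        · have hIH := IH'.2.2.2.2 (by omega)
          split_ifs <;> omega
        · obtain ⟨hc1, hc2⟩ := hβ'0N (by omega)
          have hIH := IH'.2.2.2.1 (by omega) hc1 hc2
          split_ifs <;> omega
    -- clause (c)
    have CC : (∑ i ∈ Finset.range (m+1), α i * q ^ i)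
        = (∑ i ∈ Finset.range (m+1), β i * q ^ i) - 1 →
        (∑ i ∈ Finset.range (m+1), if β i = 0 then (0:ℕ) else 1)
          ≤ (∑ i ∈ Finset.range (m+1), if α i = 0 then (0:ℕ) else 1) + 1 := by
      intro hval
      by_cases hr : -(q-2) ≤ β 0 ∧ β 0 ≤ 0
      · exact le_trans (CC0 hval hr.1 hr.2) (by omega)
      rw [hvα, hvβ] at hval
      obtain ⟨t, ht, ha0, hAB⟩ := digit (-1) (by omega) (by omega) (by linarith)
      rw [hwα, hwβ]
      by_cases hpos : 0 < β 0
      · obtain ⟨hc1, hc2⟩ := hβ'0P hpos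
        rcases ht with rfl | rfl | rfl
        · -- α 0 = β 0 - 1 - q, A = B + 1
          have hIH := IH'.2.1 (by omega) hc1 hc2
          split_ifs <;> omega
        · -- α 0 = β 0 - 1, A = B
          have hIH := IH'.1 (by omega)
          split_ifs <;> omega
        · -- α 0 = β 0 - 1 + q ≥ q : impossible
          exfalso; omega
      · -- β 0 = -(q-1)
        have hq1 : β 0 = -(q-1) := by omega
        obtain ⟨hc1, hc2⟩ := hβ'0N (by omega)
        rcases ht with rfl | rfl | rfl
        · exfalso; omega
        · exfalso; omega
        · -- α 0 = β 0 - 1 + q = 0, A = B - 1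
          have hIH := IH'.2.2.2.1 (by omega) hc1 hc2
          split_ifs <;> omega
    exact ⟨CA, CB0, CB, CC0, CC⟩


/-- no rule of `𝒫` increases the number of nonzero coefficients;
consequently a compact power sum `β` has at most as many nonzero coefficients
as any power sum `α` of the same value. -/
theorem stmt_9 (q : ℤ) (hq : 2 ≤ q) :
    (∀ (α β : ℕ → ℤ), PSStep q α β → ∀ m, (∀ i, m ≤ i → α i = 0) →
      (∀ i, m ≤ i → β i = 0) →
      ((Finset.range m).filter fun i => β i ≠ 0).card ≤
        ((Finset.range m).filter fun i => α i ≠ 0).card) ∧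
    (∀ (α β : ℕ → ℤ) (m : ℕ),
      (∀ i, |α i| ≤ q - 1) → (∀ i, |β i| ≤ q - 1) →
      (∀ i, m ≤ i → α i = 0) → (∀ i, m ≤ i → β i = 0) →
      ¬ PSReducible q β →
      (∑ i ∈ Finset.range m, α i * q ^ i) =
        (∑ i ∈ Finset.range m, β i * q ^ i) →
      ((Finset.range m).filter fun i => β i ≠ 0).card ≤
        ((Finset.range m).filter fun i => α i ≠ 0).card) := by
  constructor
  · intro α β h m hsα hsβ
    exact step_wt q hq α β h m hsα hsβ
  · intro α β m hbα hbβ hsα hsβ hirr hval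
    have hlc := irr_lc q hq β hbβ m hsβ hirr
    have hres := (main_min q hq m α β hbα hbβ hsα hsβ hlc).1 hval
    rw [wt_card, wt_card]
    exact hres
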